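/- Let tsm be a time-stamping modulo M weakly satisfying a linear weighted graph G with no gtFr-geqFr* cycle, and let ts_1(v) be the maximal number of gtFr-edges on a geqFr-path starting at v. Then ts_1 is well-defined with 0 ≤ ts_1(v) ≤ |V|, and for every (u,v) ∈ geqFr, ts_1(u) ≥ ts_1(v), with strict inequality ts_1(u) > ts_1(v) when (u,v) ∈ gtFr. -/
import Mathlib


open Finset

/-- A weighted constraint edge: `ts tgt - ts src ◁ wt` where ◁ is `<` if `strict` else `≤`. -/
structure WEdge where
  src : ℕ
  strict : Bool
  wt : ℤ
  tgt : ℕ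
deriving DecidableEq

/-- `ts` satisfies the constraint of edge `e`. -/
def satEdge (ts : ℕ → ℝ) (e : WEdge) : Prop :=
  if e.strict then ts e.tgt - ts e.src < (e.wt : ℝ) else ts e.tgt - ts e.src ≤ (e.wt : ℝ)

/-- `ts` realizes the linear weighted graph on vertices `{1,…,n}` with edge set `E`:
monotone w.r.t. the linear order and all difference constraints hold. -/
def Realizes (n : ℕ) (E : Finset WEdge) (ts : ℕ → ℝ) : Prop :=
  (∀ u v : ℕ, 1 ≤ u → u ≤ v → v ≤ n → ts u ≤ ts v) ∧ ∀ e ∈ E, satEdge ts e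

/-- Integer parts of consecutive time-stamps differ by at least 0 and at most `M - 1`. -/
def SlowlyMonotone (M : ℤ) (n : ℕ) (ts : ℕ → ℝ) : Prop :=
  ∀ i : ℕ, 1 ≤ i → i < n → 0 ≤ ⌊ts (i + 1)⌋ - ⌊ts i⌋ ∧ ⌊ts (i + 1)⌋ - ⌊ts i⌋ ≤ M - 1

/-- All edges of the graph have endpoints in `{1,…,n}`. -/
def InGraph (n : ℕ) (E : Finset WEdge) : Prop :=
  ∀ e ∈ E, 1 ≤ e.src ∧ e.src ≤ n ∧ 1 ≤ e.tgt ∧ e.tgt ≤ n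

/-- `M` weight-bounded: all weights have absolute value at most `M - 1`. -/
def WtBounded (M : ℤ) (E : Finset WEdge) : Prop := ∀ e ∈ E, |e.wt| ≤ M - 1

/-- `dtsm(u,v) = (tsm v - tsm u) mod M`. -/
def dtsm (M : ℤ) (tsm : ℕ → ℤ) (u v : ℕ) : ℤ := (tsm v - tsm u) % M

/-- `dtsm⁺(u,v)`, for `u ≤ v`: the cumulative sum of consecutive `dtsm`'s, capped at `M`. -/
def dtsmP (M : ℤ) (tsm : ℕ → ℤ) (u v : ℕ) : ℤ :=
  min M (∑ i ∈ Finset.Ico u v, dtsm M tsm i (i + 1))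

/-- Antisymmetric extension of `dtsm⁺` to arbitrary pairs. -/
def dtsmE (M : ℤ) (tsm : ℕ → ℤ) (u v : ℕ) : ℤ :=
  if u ≤ v then dtsmP M tsm u v else - dtsmP M tsm v u

/-- `(u,v)` is `tsm`-big. -/
def TsmBig (M : ℤ) (tsm : ℕ → ℤ) (u v : ℕ) : Prop :=
  ∃ w1 w2 : ℕ, u ≤ w1 ∧ w1 < w2 ∧ w2 ≤ v ∧ M ≤ dtsm M tsm u w1 + dtsm M tsm w1 w2

/-- `tsm` is a time-stamping modulo `M` on vertices `{1,…,n}`. -/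
def TSM (M : ℤ) (n : ℕ) (tsm : ℕ → ℤ) : Prop :=
  ∀ v, 1 ≤ v → v ≤ n → 0 ≤ tsm v ∧ tsm v < M

/-- `tsm` weakly satisfies the graph (forward/backward conditions). -/
def WeaklySat (M : ℤ) (E : Finset WEdge) (tsm : ℕ → ℤ) : Prop :=
  ∀ e ∈ E,
    (e.src ≤ e.tgt → ¬ TsmBig M tsm e.src e.tgt ∧ dtsm M tsm e.src e.tgt ≤ e.wt) ∧
    (e.tgt < e.src → TsmBig M tsm e.tgt e.src ∨ - e.wt ≤ dtsm M tsm e.tgt e.src)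

/-- `(u,v) ∈ geqFr`: fractional part of `ts u` must be ≥ that of `ts v`. -/
def geqFr (M : ℤ) (tsm : ℕ → ℤ) (E : Finset WEdge) (u v : ℕ) : Prop :=
  (∃ e ∈ E, e.src = u ∧ e.tgt = v ∧ dtsmE M tsm u v = e.wt) ∨
  (v + 1 = u ∧ dtsmE M tsm u v = 0)

/-- `(u,v) ∈ gtFr`: fractional part of `ts u` must be > that of `ts v`. -/
def gtFr (M : ℤ) (tsm : ℕ → ℤ) (E : Finset WEdge) (u v : ℕ) : Prop :=
  ∃ e ∈ E, e.strict = true ∧ e.src = u ∧ e.tgt = v ∧ dtsmE M tsm u v = e.wt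

open Classical in
/-- Number of `gtFr` edges used by the path `p 0, p 1, …, p k`. -/
noncomputable def gtCount (M : ℤ) (tsm : ℕ → ℤ) (E : Finset WEdge) (k : ℕ) (p : ℕ → ℕ) : ℕ :=
  ((Finset.range k).filter (fun i => gtFr M tsm E (p i) (p (i + 1)))).card

open Classical in
lemma gtCount_succ (M : ℤ) (tsm : ℕ → ℤ) (E : Finset WEdge) (k : ℕ) (p : ℕ → ℕ) :
    gtCount M tsm E (k + 1) p =
      gtCount M tsm E k p + (if gtFr M tsm E (p k) (p (k + 1)) then 1 else 0) := by
  unfold gtCount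
  rw [Finset.range_add_one, Finset.filter_insert]
  by_cases h : gtFr M tsm E (p k) (p (k + 1))
  · simp only [h, if_true]
    rw [Finset.card_insert_of_notMem (by simp)]
  · simp [h]

open Classical in
lemma gtCount_prepend (M : ℤ) (tsm : ℕ → ℤ) (E : Finset WEdge) (k : ℕ) (p : ℕ → ℕ) (u : ℕ) :
    gtCount M tsm E (k + 1) (fun i => if i = 0 then u else p (i - 1)) =
      (if gtFr M tsm E u (p 0) then 1 else 0) + gtCount M tsm E k p := by
  induction k with
  | zero =>
    unfold gtCount
    by_cases h : gtFr M tsm E u (p 0) <;>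
      simp [Finset.range_one, Finset.filter_singleton, h]
  | succ k ih =>
    rw [gtCount_succ, ih, gtCount_succ]
    simp only [Nat.succ_ne_zero, if_false, Nat.add_sub_cancel]
    ring

lemma path_rtg (M : ℤ) (tsm : ℕ → ℤ) (E : Finset WEdge) (k : ℕ) (p : ℕ → ℕ)
    (hp : ∀ i < k, geqFr M tsm E (p i) (p (i + 1))) (a b : ℕ) (hab : a ≤ b) (hbk : b ≤ k) :
    Relation.ReflTransGen (geqFr M tsm E) (p a) (p b) := by
  induction b, hab using Nat.le_induction with
  | base => exact Relation.ReflTransGen.refl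
  | succ b hab ih =>
    exact Relation.ReflTransGen.tail (ih (Nat.le_of_succ_le hbk))
      (hp b (Nat.lt_of_succ_le hbk))

open Classical in
lemma gtCount_le (M : ℤ) (tsm : ℕ → ℤ) (n : ℕ) (E : Finset WEdge) (hG : InGraph n E)
    (hnc : ¬ ∃ u v : ℕ, gtFr M tsm E u v ∧ Relation.ReflTransGen (geqFr M tsm E) v u)
    (k : ℕ) (p : ℕ → ℕ) (hp : ∀ i < k, geqFr M tsm E (p i) (p (i + 1))) :
    gtCount M tsm E k p ≤ n := by
  have key : ∀ i ∈ (Finset.range k).filter (fun i => gtFr M tsm E (p i) (p (i + 1))),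
      p i ∈ Finset.Icc 1 n := by
    intro i hi
    rw [Finset.mem_filter] at hi
    obtain ⟨e, he, _, hsrc, _, _⟩ := hi.2
    obtain ⟨h1, h2, _, _⟩ := hG e he
    rw [Finset.mem_Icc]
    exact ⟨hsrc ▸ h1, hsrc ▸ h2⟩
  have inj : Set.InjOn p ((Finset.range k).filter
      (fun i => gtFr M tsm E (p i) (p (i + 1)))) := by
    intro i hi j hj hij
    simp only [Finset.coe_filter, Set.mem_setOf_eq, Finset.mem_range] at hi hj
    rcases lt_trichotomy i j with hlt | heq | hlt
    · exact (hnc ⟨p i, p (i + 1), hi.2,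
        by rw [hij]; exact path_rtg M tsm E k p hp (i + 1) j hlt hj.1.le⟩).elim
    · exact heq
    · exact (hnc ⟨p j, p (j + 1), hj.2,
        by rw [← hij]; exact path_rtg M tsm E k p hp (j + 1) i hlt hi.1.le⟩).elim
  calc gtCount M tsm E k p ≤ (Finset.Icc 1 n).card :=
        Finset.card_le_card_of_injOn p key inj
    _ = n := by rw [Nat.card_Icc]; omega

theorem ts1_well_defined_and_monotone (M : ℤ) (hM : 1 ≤ M) (n : ℕ) (E : Finset WEdge)
    (hG : InGraph n E) (hW : WtBounded M E) (tsm : ℕ → ℤ) (hT : TSM M n tsm)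
    (hWS : WeaklySat M E tsm)
    (hnc : ¬ ∃ u v : ℕ, gtFr M tsm E u v ∧ Relation.ReflTransGen (geqFr M tsm E) v u) :
    ∃ ts1 : ℕ → ℕ,
      (∀ v : ℕ,
        (∀ (k : ℕ) (p : ℕ → ℕ), p 0 = v → (∀ i < k, geqFr M tsm E (p i) (p (i + 1))) →
          gtCount M tsm E k p ≤ ts1 v) ∧
        (∃ (k : ℕ) (p : ℕ → ℕ), p 0 = v ∧ (∀ i < k, geqFr M tsm E (p i) (p (i + 1))) ∧
          gtCount M tsm E k p = ts1 v)) ∧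
      (∀ v : ℕ, 1 ≤ v → v ≤ n → ts1 v ≤ n) ∧
      (∀ u v : ℕ, geqFr M tsm E u v → ts1 v ≤ ts1 u ∧
        (gtFr M tsm E u v → ts1 v < ts1 u)) := by
  classical
  set S : ℕ → Set ℕ := fun v => {c | ∃ (k : ℕ) (p : ℕ → ℕ), p 0 = v ∧
    (∀ i < k, geqFr M tsm E (p i) (p (i + 1))) ∧ gtCount M tsm E k p = c} with hS
  have hne : ∀ v, (S v).Nonempty := by
    intro v
    exact ⟨0, 0, fun _ => v, rfl, by omega, by simp [gtCount]⟩
  have hbdd : ∀ v c, c ∈ S v → c ≤ n := by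
    rintro v c ⟨k, p, _, hp, rfl⟩
    exact gtCount_le M tsm n E hG hnc k p hp
  have hbddA : ∀ v, BddAbove (S v) := fun v => ⟨n, fun c hc => hbdd v c hc⟩
  refine ⟨fun v => sSup (S v), ?_, ?_, ?_⟩
  · intro v
    constructor
    · intro k p hp0 hp
      exact le_csSup (hbddA v) ⟨k, p, hp0, hp, rfl⟩
    · exact Nat.sSup_mem (hne v) (hbddA v)
  · intro v _ _
    exact hbdd v _ (Nat.sSup_mem (hne v) (hbddA v))
  · intro u v huv
    obtain ⟨k, p, hp0, hp, hc⟩ := Nat.sSup_mem (hne v) (hbddA v)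
    set p' : ℕ → ℕ := fun i => if i = 0 then u else p (i - 1) with hp'
    have hp'valid : ∀ i < k + 1, geqFr M tsm E (p' i) (p' (i + 1)) := by
      intro i hi
      match i with
      | 0 => simpa [hp', hp0] using huv
      | Nat.succ j => simpa [hp'] using hp j (by omega)
    have hmem : ∀ c, gtCount M tsm E (k + 1) p' = c → c ∈ S u :=
      fun c h => ⟨k + 1, p', by simp [hp'], hp'valid, h⟩
    have hcount := gtCount_prepend M tsm E k p u
    constructor
    · calc sSup (S v) = gtCount M tsm E k p := hc.symm
        _ ≤ gtCount M tsm E (k + 1) p' := by rw [hcount]; omega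
        _ ≤ sSup (S u) := le_csSup (hbddA u) (hmem _ rfl)
    · intro hgt
      have : gtCount M tsm E (k + 1) p' = 1 + gtCount M tsm E k p := by
        rw [hcount, if_pos (hp0 ▸ hgt)]
      calc sSup (S v) < gtCount M tsm E (k + 1) p' := by rw [this, hc]; omega
        _ ≤ sSup (S u) := le_csSup (hbddA u) (hmem _ rfl)
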